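/- arXiv:2508.21387 — 9 statements merged into one kernel-verified Lean document; each statement's English description precedes it below -/
import Mathlib

section
/- The binary operation on B_Z^{F²} = ℤ × ℤ × {[0), [1)} defined by (i₁,j₁,F₁)·(i₂,j₂,F₂) = (i₁−j₁+i₂, j₂, (j₁−i₂+F₁)∩F₂) if j₁ ≤ i₂, and (i₁, j₁−i₂+j₂, F₁∩(i₂−j₁+F₂)) if j₁ ≥ i₂, is associative (note the two cases agree when j₁ = i₂, since both shifts are by 0). -/
/-- Elements of `B_Z^{F²}`: `(i, j, q)` encodes `(i, j, [q))` with `q ∈ {0,1}`. -/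
abbrev BZF : Type := ℤ × ℤ × Fin 2

/-- Convert an integer `v ∈ {0,1}` (value of `max`-computations on ray indices)
back to the index of the ray `[v)`. -/
def famOfInt (v : ℤ) : Fin 2 := if v ≤ 0 then 0 else 1

/-- The semigroup operation on `B_Z^{F²}`: the third coordinates are combined via
shift `n + [a) = [max (a+n) 0)` and intersection `[a) ∩ [b) = [max a b)`. -/
def bzMul (x y : BZF) : BZF :=
  if x.2.1 ≤ y.1 then
    (x.1 - x.2.1 + y.1, y.2.1,
      famOfInt (max (max (((x.2.2 : ℕ) : ℤ) + x.2.1 - y.1) 0) ((y.2.2 : ℕ) : ℤ)))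
  else
    (x.1, x.2.1 - y.1 + y.2.1,
      famOfInt (max ((x.2.2 : ℕ) : ℤ) (max (((y.2.2 : ℕ) : ℤ) + y.1 - x.2.1) 0)))

/-- Endomorphism predicate for maps of `B_Z^{F²}`. -/
def IsHom (e : BZF → BZF) : Prop := ∀ x y : BZF, e (bzMul x y) = bzMul (e x) (e y)

/-- The distinguished idempotent `(0,0,[0))`. -/
def c0 : BZF := (0, 0, 0)

/-!
An element `(i, j, [a))` acts on `ℤ` as the translation `p ↦ p + (j - i)`, restricted once to
`[i, ∞)` and once to `[i + a, ∞)`. Under this action `bzMul` is composition of partial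
translations, which is associative, and the two restricted translations determine the element.
-/

/-- The partial map `p ↦ p + shift` of `α` with domain `[start, ∞)`; `f * g` is the composite
"first `f`, then `g`". -/
@[ext]
structure RayTranslation (α : Type*) where
  shift : α
  start : α

namespace RayTranslation

variable {α : Type*} [AddCommGroup α] [LinearOrder α]

instance : Mul (RayTranslation α) :=
  ⟨fun f g => ⟨f.shift + g.shift, max f.start (g.start - f.shift)⟩⟩

@[simp]
lemma shift_mul (f g : RayTranslation α) : (f * g).shift = f.shift + g.shift := rfl

@[simp]
lemma start_mul (f g : RayTranslation α) :
    (f * g).start = max f.start (g.start - f.shift) := rfl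

instance [IsOrderedAddMonoid α] : Semigroup (RayTranslation α) where
  mul_assoc f g h := by
    ext <;> simp only [shift_mul, start_mul, add_assoc, ← max_sub_sub_right, max_assoc,
      sub_add_eq_sub_sub_swap]

end RayTranslation

lemma famOfInt_coe {v : ℤ} (h₀ : 0 ≤ v) (h₁ : v ≤ 1) : (((famOfInt v : Fin 2) : ℕ) : ℤ) = v := by
  unfold famOfInt
  split_ifs <;> simp <;> omega

def rayTranslations (x : BZF) : RayTranslation ℤ × RayTranslation ℤ :=
  (⟨x.2.1 - x.1, x.1⟩, ⟨x.2.1 - x.1, x.1 + ((x.2.2 : ℕ) : ℤ)⟩)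

lemma rayTranslations_injective : Function.Injective rayTranslations := by
  rintro ⟨i, j, a⟩ ⟨i', j', a'⟩ h
  simp only [rayTranslations, Prod.mk.injEq, RayTranslation.mk.injEq] at h
  obtain ⟨⟨hs, hi⟩, -, ha⟩ := h
  simp only [Prod.mk.injEq, Fin.ext_iff]
  omega

lemma rayTranslations_bzMul (x y : BZF) :
    rayTranslations (bzMul x y) = rayTranslations x * rayTranslations y := by
  obtain ⟨i₁, j₁, a₁⟩ := x
  obtain ⟨i₂, j₂, a₂⟩ := y
  have := a₁.isLt
  have := a₂.isLt
  dsimp only [bzMul]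
  -- in both cases the argument of `famOfInt` lies in `{0, 1}`
  split_ifs <;>
  ext <;> simp only [rayTranslations, Prod.fst_mul, Prod.snd_mul,
    RayTranslation.shift_mul, RayTranslation.start_mul] <;> try rw [famOfInt_coe]
  all_goals omega

/-- The operation on `B_Z^{F²}` is associative. -/
theorem bzMul_assoc (x y z : BZF) :
    bzMul (bzMul x y) z = bzMul x (bzMul y z) :=
  rayTranslations_injective <| by simp only [rayTranslations_bzMul, mul_assoc]
end

section
/- Fix a positive integer k and p ∈ {0, …, k−1}. The map α_{k,p} : B_Z^{F²} → B_Z^{F²} defined by (i,j,[0)) ↦ (ki, kj, [0)) and (i,j,[1)) ↦ (p+ki, p+kj, [1)) for i, j ∈ ℤ is an injective endomorphism of B_Z^{F²}. -/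
/-- The map `α_{k,p}` on `B_Z^{F²}`. -/
def alphaMap (k p : ℤ) (x : BZF) : BZF :=
  if x.2.2 = 0 then (k * x.1, k * x.2.1, 0) else (p + k * x.1, p + k * x.2.1, 1)

/-!
Compare the inner pairs `(j₁, F₁)` and `(i₂, F₂)` of a product `(i₁, j₁, F₁) · (i₂, j₂, F₂)`
lexicographically, with `[0) < [1)`: if `(j₁, F₁) ≤ (i₂, F₂)` the product is
`(i₁ - j₁ + i₂, j₂, F₂)`, otherwise it is `(i₁, j₁ - i₂ + j₂, F₁)`. On each pair `(n, [q))` the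
map `α_{k,p}` acts as `(n, q) ↦ (q p + k n, q)`, which is lexicographically monotone when
`0 ≤ p < k` and affine in `n`, so it preserves both the case distinction and the formulas.
-/

section Product

variable {i₁ j₁ i₂ j₂ : ℤ} {q₁ q₂ : Fin 2}

theorem bzMul_of_toLex_le (h : toLex (j₁, q₁) ≤ toLex (i₂, q₂)) :
    bzMul (i₁, j₁, q₁) (i₂, j₂, q₂) = (i₁ - j₁ + i₂, j₂, q₂) := by
  rw [Prod.Lex.toLex_le_toLex] at h
  rcases h with h | ⟨rfl, h⟩
  · have hshift : ((q₁ : ℕ) : ℤ) + j₁ - i₂ ≤ 0 := by omega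
    fin_cases q₂ <;> simp [bzMul, famOfInt, h.le, hshift]
  · fin_cases q₁ <;> fin_cases q₂ <;> simp_all [bzMul, famOfInt]

theorem bzMul_of_le_toLex (h : toLex (i₂, q₂) ≤ toLex (j₁, q₁)) :
    bzMul (i₁, j₁, q₁) (i₂, j₂, q₂) = (i₁, j₁ - i₂ + j₂, q₁) := by
  rw [Prod.Lex.toLex_le_toLex] at h
  rcases h with h | ⟨rfl, h⟩
  · have hshift : ((q₂ : ℕ) : ℤ) + i₂ - j₁ ≤ 0 := by omega
    fin_cases q₁ <;> simp [bzMul, famOfInt, h.not_ge, hshift]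
  · fin_cases q₁ <;> fin_cases q₂ <;> simp_all [bzMul, famOfInt]

end Product

section Alpha

variable {k p : ℤ}

theorem alphaMap_mk (i j : ℤ) (q : Fin 2) :
    alphaMap k p (i, j, q) = ((q : ℕ) * p + k * i, (q : ℕ) * p + k * j, q) := by
  fin_cases q <;> simp [alphaMap]

theorem toLex_affine_le_toLex_affine (hp0 : 0 ≤ p) (hpk : p < k) {n₁ n₂ : ℤ}
    {q₁ q₂ : Fin 2} (h : toLex (n₁, q₁) ≤ toLex (n₂, q₂)) :
    toLex (((q₁ : ℕ) : ℤ) * p + k * n₁, q₁) ≤ toLex (((q₂ : ℕ) : ℤ) * p + k * n₂, q₂) := by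
  rw [Prod.Lex.toLex_le_toLex] at h ⊢
  rcases h with h | ⟨rfl, h⟩
  · have hstep : k * n₁ + k ≤ k * n₂ := by nlinarith
    fin_cases q₁ <;> fin_cases q₂ <;> simp <;> omega
  · fin_cases q₁ <;> fin_cases q₂ <;> simp at h ⊢; omega

theorem alphaMap_injective (hk : k ≠ 0) : Function.Injective (alphaMap k p) := by
  rintro ⟨i₁, j₁, q₁⟩ ⟨i₂, j₂, q₂⟩ h
  simp only [alphaMap_mk, Prod.mk.injEq] at h
  obtain ⟨hi, hj, rfl⟩ := h
  simp_all

theorem isHom_alphaMap (hp0 : 0 ≤ p) (hpk : p < k) : IsHom (alphaMap k p) := by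
  rintro ⟨i₁, j₁, q₁⟩ ⟨i₂, j₂, q₂⟩
  rcases le_total (toLex (j₁, q₁)) (toLex (i₂, q₂)) with h | h
  · rw [bzMul_of_toLex_le h, alphaMap_mk, alphaMap_mk, alphaMap_mk,
      bzMul_of_toLex_le (toLex_affine_le_toLex_affine hp0 hpk h)]
    congr 1
    ring
  · rw [bzMul_of_le_toLex h, alphaMap_mk, alphaMap_mk, alphaMap_mk,
      bzMul_of_le_toLex (toLex_affine_le_toLex_affine hp0 hpk h)]
    congr 2
    ring

end Alpha

theorem alphaMap_injective_endomorphism_general (k p : ℤ)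
    (hp0 : 0 ≤ p) (hpk : p < k) :
    Function.Injective (alphaMap k p) ∧ IsHom (alphaMap k p) :=
  ⟨alphaMap_injective (by omega), isHom_alphaMap hp0 hpk⟩

/-- For a positive integer `k` and `p ∈ {0,…,k-1}`, `α_{k,p}` is an injective
endomorphism of `B_Z^{F²}`. -/
theorem alphaMap_injective_endomorphism (k p : ℤ)
    (hk : 0 < k) (hp0 : 0 ≤ p) (hpk : p < k) :
    Function.Injective (alphaMap k p) ∧ IsHom (alphaMap k p) :=
  alphaMap_injective_endomorphism_general k p hp0 hpk
end

section
/- Fix an integer k ≥ 2 and p ∈ {1, …, k−1}. The map β_{k,p} : B_Z^{F²} → B_Z^{F²} defined by (i,j,[0)) ↦ (ki, kj, [0)) and (i,j,[1)) ↦ (p+ki, p+kj, [0)) for i, j ∈ ℤ is an injective endomorphism of B_Z^{F²}. -/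
/-- The map `β_{k,p}` on `B_Z^{F²}`. -/
def betaMap (k p : ℤ) (x : BZF) : BZF :=
  if x.2.2 = 0 then (k * x.1, k * x.2.1, 0) else (p + k * x.1, p + k * x.2.1, 0)

/-!
Order the ends `(n, [q))` of elements of `B_Z^{F²}` lexicographically. The product of
`(i₁, j₁, F₁)` and `(i₂, j₂, F₂)` is given by one of three affine formulas, selected by comparing
`(j₁, F₁)` with `(i₂, F₂)`. The map `β_{k,p}` acts on both ends by `(n, q) ↦ k n + p q`, which is
strictly monotone for `0 < p < k`, and sends everything into the `[0)`-part. So it preserves the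
comparison, hence the case of the product formula, and the formulas are affine in the ends.
-/

section

variable {i₁ j₁ i₂ j₂ : ℤ} {F₁ F₂ : Fin 2}

theorem famOfInt_val (q : Fin 2) : famOfInt ((q : ℕ) : ℤ) = q := by
  fin_cases q <;> rfl

theorem bzMul_of_toLex_lt (h : toLex (j₁, F₁) < toLex (i₂, F₂)) :
    bzMul (i₁, j₁, F₁) (i₂, j₂, F₂) = (i₁ - j₁ + i₂, j₂, F₂) := by
  obtain hj | ⟨rfl, hF⟩ : j₁ < i₂ ∨ j₁ = i₂ ∧ F₁ < F₂ := Prod.Lex.toLex_lt_toLex.1 h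
  · have hshift : ((F₁ : ℕ) : ℤ) + j₁ - i₂ ≤ 0 := by omega
    simp [bzMul, hj.le, hshift, famOfInt_val]
  · clear h
    fin_cases F₁ <;> fin_cases F₂ <;> simp_all [bzMul, famOfInt]

theorem bzMul_of_toLex_gt (h : toLex (i₂, F₂) < toLex (j₁, F₁)) :
    bzMul (i₁, j₁, F₁) (i₂, j₂, F₂) = (i₁, j₁ - i₂ + j₂, F₁) := by
  obtain hj | ⟨rfl, hF⟩ : i₂ < j₁ ∨ i₂ = j₁ ∧ F₂ < F₁ := Prod.Lex.toLex_lt_toLex.1 h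
  · have hshift : ((F₂ : ℕ) : ℤ) + i₂ - j₁ ≤ 0 := by omega
    simp [bzMul, not_le.2 hj, hshift, famOfInt_val]
  · clear h
    fin_cases F₁ <;> fin_cases F₂ <;> simp_all [bzMul, famOfInt]

theorem bzMul_of_eq (i j j' : ℤ) (F : Fin 2) :
    bzMul (i, j, F) (j, j', F) = (i, j', F) := by
  fin_cases F <;> simp [bzMul, famOfInt]

end

def lexEmbed (k p : ℤ) (x : ℤ ×ₗ Fin 2) : ℤ := k * (ofLex x).1 + p * ((ofLex x).2 : ℕ)

theorem lexEmbed_strictMono {k p : ℤ} (hp : 0 < p) (hpk : p < k) :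
    StrictMono (lexEmbed k p) := by
  intro x y h
  simp only [lexEmbed]
  rcases Prod.Lex.lt_iff.1 h with hnm | ⟨heq, hqq'⟩
  · have hq : (((ofLex x).2 : ℕ) : ℤ) ≤ 1 := by omega
    have hq' : 0 ≤ (((ofLex y).2 : ℕ) : ℤ) := by omega
    have hstep : k * (ofLex x).1 + k ≤ k * (ofLex y).1 := by nlinarith
    nlinarith
  · have hq : (((ofLex x).2 : ℕ) : ℤ) < ((ofLex y).2 : ℕ) := by exact_mod_cast hqq'
    rw [heq]
    nlinarith

theorem betaMap_eq (k p i j : ℤ) (q : Fin 2) :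
    betaMap k p (i, j, q) = (lexEmbed k p (toLex (i, q)), lexEmbed k p (toLex (j, q)), 0) := by
  fin_cases q <;> simp [betaMap, lexEmbed, add_comm]

section

variable {k p : ℤ}

theorem betaMap_injective (hp : 0 < p) (hpk : p < k) : Function.Injective (betaMap k p) := by
  have he := (lexEmbed_strictMono hp hpk).injective
  rintro ⟨i₁, j₁, F₁⟩ ⟨i₂, j₂, F₂⟩ h
  simp only [betaMap_eq, Prod.mk.injEq, and_true] at h
  obtain ⟨hi, hF⟩ := Prod.mk.inj (toLex.injective (he h.1))
  obtain ⟨hj, -⟩ := Prod.mk.inj (toLex.injective (he h.2))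
  rw [hi, hj, hF]

theorem betaMap_isHom (hp : 0 < p) (hpk : p < k) : IsHom (betaMap k p) := by
  have he := lexEmbed_strictMono hp hpk
  have hflag {b c : ℤ} (h : b < c) : toLex (b, (0 : Fin 2)) < toLex (c, 0) :=
    Prod.Lex.toLex_lt_toLex.2 (Or.inl h)
  rintro ⟨i₁, j₁, F₁⟩ ⟨i₂, j₂, F₂⟩
  simp only [betaMap_eq]
  rcases lt_trichotomy (toLex (j₁, F₁)) (toLex (i₂, F₂)) with h | h | h
  · rw [bzMul_of_toLex_lt h, betaMap_eq, bzMul_of_toLex_lt (hflag (he h))]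
    simp only [lexEmbed, ofLex_toLex]
    congr 1
    ring
  · obtain ⟨rfl, rfl⟩ := Prod.mk.inj (toLex.injective h)
    rw [bzMul_of_eq, betaMap_eq, bzMul_of_eq]
  · rw [bzMul_of_toLex_gt h, betaMap_eq, bzMul_of_toLex_gt (hflag (he h))]
    simp only [lexEmbed, ofLex_toLex]
    congr 2
    ring

end

theorem betaMap_injective_endomorphism_general (k p : ℤ)
    (hp1 : 1 ≤ p) (hpk : p < k) :
    Function.Injective (betaMap k p) ∧ IsHom (betaMap k p) :=
  ⟨betaMap_injective hp1 hpk, betaMap_isHom hp1 hpk⟩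

/-- For an integer `k ≥ 2` and `p ∈ {1,…,k-1}`, `β_{k,p}` is an injective
endomorphism of `B_Z^{F²}`. -/
theorem betaMap_injective_endomorphism (k p : ℤ)
    (hk : 2 ≤ k) (hp1 : 1 ≤ p) (hpk : p < k) :
    Function.Injective (betaMap k p) ∧ IsHom (betaMap k p) :=
  betaMap_injective_endomorphism_general k p hp1 hpk
end

section
/- If e is an endomorphism of B_Z^{F²} with (0,0,[0))e = (0,0,[0)), then there exists a non-negative integer n such that (i,j,[0))e = (ni, nj, [0)) for all i, j ∈ ℤ. -/
/-!
Using that `c0` is fixed, the relations `(i,0,[0))·c0 = (i,0,[0))`, `c0·(0,i,[0)) = (0,i,[0))` and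
`(0,i,[0))·(i,0,[0)) = c0` force `e (i,0,[0)) = (P i,0,[0))` and `e (0,i,[0)) = (0,P i,[0))` for a
common integer `P i`; as `(i,j,[0)) = (i,0,[0))·(0,j,[0))`, `e` maps `(i,j,[0))` to `(P i,P j,[0))`.
Applying `e` to `(a,0,[0))·(1,0,[0)) = (a+1,0,[0))` then gives `0 ≤ P 1` and
`P (a+1) = P a + P 1`, so `P` is multiplication by `P 1`.
-/

lemma bzMul_c0_eq_self_iff (x : BZF) : bzMul x c0 = x ↔ 0 ≤ x.2.1 := by
  obtain ⟨x₁, x₂, φ⟩ := x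
  by_cases hx : x₂ ≤ 0
  · fin_cases φ <;> simp [bzMul, c0, famOfInt, hx] <;> omega
  · fin_cases φ <;> simp [bzMul, c0, famOfInt, hx, le_of_not_ge hx]

lemma c0_bzMul_eq_self_iff (x : BZF) : bzMul c0 x = x ↔ 0 ≤ x.1 := by
  obtain ⟨x₁, x₂, φ⟩ := x
  by_cases hx : 0 ≤ x₁
  · fin_cases φ <;> simp [bzMul, c0, famOfInt, hx]
  · simp [bzMul, c0, hx]
    omega

lemma eq_of_bzMul_eq_c0 {x y : BZF} (hy : 0 ≤ y.1) (hx : 0 ≤ x.2.1) (h : bzMul y x = c0) :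
    y = (0, x.1, 0) ∧ x = (x.1, 0, 0) := by
  obtain ⟨y₁, y₂, ψ⟩ := y
  obtain ⟨x₁, x₂, φ⟩ := x
  simp only at hx hy
  by_cases hyx : y₂ ≤ x₁
  · fin_cases φ <;> fin_cases ψ <;> simp [bzMul, c0, famOfInt, hyx] at h ⊢ <;> omega
  · simp [bzMul, c0, hyx] at h
    omega

lemma bzMul_axes (a b : ℤ) : bzMul (a, 0, 0) (0, b, 0) = (a, b, 0) := by
  simp [bzMul, famOfInt]

lemma bzMul_axes_swap (a : ℤ) : bzMul (0, a, 0) (a, 0, 0) = c0 := by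
  simp [bzMul, famOfInt, c0]

lemma bzMul_axis_eq_iff (a b c : ℤ) :
    bzMul (a, 0, 0) (b, 0, 0) = (c, 0, 0) ↔ 0 ≤ b ∧ c = a + b := by
  by_cases hb : 0 ≤ b
  · simp [bzMul, famOfInt, hb, eq_comm]
  · simp [bzMul, hb]
    omega

lemma apply_eq_apply_one_mul_of_map_add_one {P : ℤ → ℤ} (h : ∀ a, P (a + 1) = P a + P 1)
    (k : ℤ) : P k = P 1 * k := by
  have hP0 : P 0 = 0 := by simpa using h 0
  induction k using Int.induction_on with
  | zero => simpa using hP0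
  | succ k ih => rw [h, ih]; ring
  | pred k ih =>
    have hk := h (-(k : ℤ) - 1)
    rw [sub_add_cancel, ih] at hk
    linarith

section Endomorphism

variable {e : BZF → BZF}

lemma IsHom.exists_apply_axes (he : IsHom e) (h0 : e c0 = c0) (i : ℤ) :
    ∃ p : ℤ, e (i, 0, 0) = (p, 0, 0) ∧ e (0, i, 0) = (0, p, 0) := by
  have hx : 0 ≤ (e (i, 0, 0)).2.1 := by
    rw [← bzMul_c0_eq_self_iff, ← h0, ← he, (bzMul_c0_eq_self_iff _).mpr le_rfl]
  have hy : 0 ≤ (e (0, i, 0)).1 := by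
    rw [← c0_bzMul_eq_self_iff, ← h0, ← he, (c0_bzMul_eq_self_iff _).mpr le_rfl]
  have hyx : bzMul (e (0, i, 0)) (e (i, 0, 0)) = c0 := by
    rw [← he, bzMul_axes_swap, h0]
  obtain ⟨hy', hx'⟩ := eq_of_bzMul_eq_c0 hy hx hyx
  exact ⟨_, hx', hy'⟩

lemma IsHom.exists_apply_zero_layer (he : IsHom e) (h0 : e c0 = c0) :
    ∃ P : ℤ → ℤ, ∀ i j : ℤ, e (i, j, 0) = (P i, P j, 0) := by
  choose P hP₁ hP₂ using he.exists_apply_axes h0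
  refine ⟨P, fun i j => ?_⟩
  rw [← bzMul_axes, he, hP₁, hP₂, bzMul_axes]

lemma IsHom.map_add_one {P : ℤ → ℤ} (he : IsHom e) (hP : ∀ i : ℤ, e (i, 0, 0) = (P i, 0, 0))
    (a : ℤ) : 0 ≤ P 1 ∧ P (a + 1) = P a + P 1 := by
  rw [← bzMul_axis_eq_iff, ← hP a, ← hP 1, ← hP (a + 1), ← he,
    (bzMul_axis_eq_iff a 1 (a + 1)).mpr ⟨zero_le_one, rfl⟩]

end Endomorphism

/-- A `(0,0,[0))`-endomorphism of `B_Z^{F²}` acts on the `[0)`-layer as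
`(i,j,[0)) ↦ (ni,nj,[0))` for some non-negative integer `n`. -/
theorem endo_fixing_c0_on_zero_layer (e : BZF → BZF)
    (he : IsHom e) (h0 : e c0 = c0) :
    ∃ n : ℕ, ∀ i j : ℤ, e (i, j, (0 : Fin 2)) = ((n : ℤ) * i, (n : ℤ) * j, (0 : Fin 2)) := by
  obtain ⟨P, hP⟩ := he.exists_apply_zero_layer h0
  have hP0 : P 0 = 0 := by
    simpa [c0] using (hP 0 0).symm.trans h0
  have hstep := he.map_add_one (P := P) (fun i => by rw [hP, hP0])
  have hlin := apply_eq_apply_one_mul_of_map_add_one (fun a => (hstep a).2)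
  refine ⟨(P 1).toNat, fun i j => ?_⟩
  rw [hP, Int.toNat_of_nonneg (hstep 0).1, hlin i, hlin j]
end

section
/- Every injective endomorphism e of B_Z^{F²} fixing (0,0,[0)) is of the form α_{k,p} for some positive integer k and p ∈ {0,…,k−1}, or of the form β_{k,p} for some integer k ≥ 2 and p ∈ {1,…,k−1}. -/
/-! The coordinates of a product are explicit piecewise-linear functions of the coordinates of
the factors (`bzMul_eq_iff`), so each identity `e (x * y) = e x * e y` at chosen `x, y` is a
system of linear constraints on the coordinates of the images. The relations
`(0,1,[0))(1,0,[0)) = c0`, `(1,0,[0))² = (2,0,[0))` and `(0,1,[0))(2,0,[0)) = (1,0,[0))` force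
`e (1,0,[0)) = (k,0,[0))` and `e (0,1,[0)) = (0,k,[0))` with `k > 0`. This propagates along both
axes by induction over `ℤ`; going down, the images of `(i-1,0,[0))` and `(0,i-1,[0))` are pinned
by their product being `c0`. Every `(i,j,F)` factors as `(i,0,[0)) (0,0,F) (0,j,[0))`, so it
remains to locate the idempotent `e (0,0,[1)) = (m,m,[g))`: `0 ≤ m ≤ k - g`, and injectivity
separates it from `c0` and `(1,1,[0))`. The case `g = 1` is `α_{k,m}`, the case `g = 0` is
`β_{k,m}`. -/

theorem bzMul_eq_iff {x y z : BZF} :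
    bzMul x y = z ↔
      z.1 = x.1 + max 0 (y.1 - x.2.1) ∧ z.2.1 = y.2.1 + max 0 (x.2.1 - y.1) ∧
        (z.2.2 : ℤ) =
          max 0 (max (x.2.2 - max 0 (y.1 - x.2.1)) (y.2.2 - max 0 (x.2.1 - y.1))) := by
  obtain ⟨i₁, j₁, f₁⟩ := x
  obtain ⟨i₂, j₂, f₂⟩ := y
  obtain ⟨i, j, f⟩ := z
  simp only [bzMul, famOfInt, Prod.ext_iff, Fin.ext_iff]
  split_ifs <;> simp only [Fin.val_zero, Fin.val_one] <;> omega

theorem BZF.eq_iff {x y : BZF} :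
    x = y ↔ x.1 = y.1 ∧ x.2.1 = y.2.1 ∧ (x.2.2 : ℤ) = y.2.2 := by
  simp only [Prod.ext_iff, Fin.ext_iff]; omega

namespace IsHom

variable {e : BZF → BZF}

theorem map_mul_eq (he : IsHom e) {x y z : BZF} (h : bzMul x y = z) :
    bzMul (e x) (e y) = e z := by
  rw [← h, he]

theorem exists_map_generators (he : IsHom e) (hinj : Function.Injective e) (h0 : e c0 = c0) :
    ∃ k : ℤ, 0 < k ∧ e (1, 0, 0) = (k, 0, 0) ∧ e (0, 1, 0) = (0, k, 0) := by
  have r₁ := bzMul_eq_iff.1 (he.map_mul_eq (show bzMul (1, 0, 0) c0 = (1, 0, 0) by decide))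
  have r₂ := bzMul_eq_iff.1 (he.map_mul_eq (show bzMul c0 (0, 1, 0) = (0, 1, 0) by decide))
  have r₃ := bzMul_eq_iff.1 (he.map_mul_eq (show bzMul (0, 1, 0) (1, 0, 0) = c0 by decide))
  rw [h0] at r₁ r₂ r₃
  simp only [c0] at r₁ r₂ r₃
  obtain ⟨k, hP, hQ⟩ : ∃ k, e (1, 0, 0) = (k, 0, 0) ∧ e (0, 1, 0) = (0, k, 0) :=
    ⟨(e (1, 0, 0)).1, BZF.eq_iff.2 (by dsimp only; omega), BZF.eq_iff.2 (by dsimp only; omega)⟩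
  have r₄ := bzMul_eq_iff.1 (he.map_mul_eq (show bzMul (1, 0, 0) (1, 0, 0) = (2, 0, 0) by decide))
  have r₅ := bzMul_eq_iff.1 (he.map_mul_eq (show bzMul (0, 1, 0) (2, 0, 0) = (1, 0, 0) by decide))
  have hk : k ≠ 0 := by
    rintro rfl
    exact hinj.ne (show ((1, 0, 0) : BZF) ≠ c0 by decide) (hP.trans h0.symm)
  rw [hP] at r₄
  rw [hP, hQ] at r₅
  dsimp only at r₄ r₅
  exact ⟨k, by omega, hP, hQ⟩

theorem map_axes (he : IsHom e) (h0 : e c0 = c0) {k : ℤ} (hk : 0 ≤ k)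
    (h₁ : e (1, 0, 0) = (k, 0, 0)) (h₂ : e (0, 1, 0) = (0, k, 0)) (i : ℤ) :
    e (i, 0, 0) = (k * i, 0, 0) ∧ e (0, i, 0) = (0, k * i, 0) := by
  induction i using Int.inductionOn' (b := 0) with
  | zero => simpa [c0] using h0
  | succ i _ ih =>
    rw [← he.map_mul_eq (show bzMul (i, 0, 0) (1, 0, 0) = (i + 1, 0, 0) from
        bzMul_eq_iff.2 (by dsimp only; omega)),
      ← he.map_mul_eq (show bzMul (0, 1, 0) (0, i, 0) = (0, i + 1, 0) from
        bzMul_eq_iff.2 (by dsimp only; omega)), ih.1, ih.2, h₁, h₂, mul_add_one]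
    exact ⟨bzMul_eq_iff.2 (by dsimp only; omega), bzMul_eq_iff.2 (by dsimp only; omega)⟩
  | pred i _ ih =>
    have r₁ := bzMul_eq_iff.1 (he.map_mul_eq (show bzMul (i - 1, 0, 0) c0 = (i - 1, 0, 0) from
      bzMul_eq_iff.2 (by simp only [c0]; omega)))
    have r₂ := bzMul_eq_iff.1 (he.map_mul_eq (show bzMul c0 (0, i - 1, 0) = (0, i - 1, 0) from
      bzMul_eq_iff.2 (by simp only [c0]; omega)))
    have r₃ := bzMul_eq_iff.1 (he.map_mul_eq (show bzMul (i - 1, 0, 0) (1, 0, 0) = (i, 0, 0) from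
      bzMul_eq_iff.2 (by dsimp only; omega)))
    have r₄ := bzMul_eq_iff.1 (he.map_mul_eq (show bzMul (0, 1, 0) (0, i - 1, 0) = (0, i, 0) from
      bzMul_eq_iff.2 (by dsimp only; omega)))
    have r₅ := bzMul_eq_iff.1 (he.map_mul_eq (show bzMul (0, i - 1, 0) (i - 1, 0, 0) = c0 from
      bzMul_eq_iff.2 (by simp only [c0]; omega)))
    rw [h0] at r₁ r₂ r₅
    rw [ih.1, h₁] at r₃
    rw [ih.2, h₂] at r₄
    simp only [c0] at r₁ r₂ r₅
    dsimp only at r₃ r₄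
    rw [show k * (i - 1) = k * i - k by ring]
    exact ⟨BZF.eq_iff.2 (by dsimp only; omega), BZF.eq_iff.2 (by dsimp only; omega)⟩

theorem map_flag_zero (he : IsHom e) (h0 : e c0 = c0) {k : ℤ} (hk : 0 ≤ k)
    (h₁ : e (1, 0, 0) = (k, 0, 0)) (h₂ : e (0, 1, 0) = (0, k, 0)) (i j : ℤ) :
    e (i, j, 0) = (k * i, k * j, 0) := by
  rw [← he.map_mul_eq (show bzMul (i, 0, 0) (0, j, 0) = (i, j, 0) from
      bzMul_eq_iff.2 (by dsimp only; omega)),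
    (he.map_axes h0 hk h₁ h₂ i).1, (he.map_axes h0 hk h₁ h₂ j).2]
  exact bzMul_eq_iff.2 (by dsimp only; omega)

theorem exists_map_zero_zero_one (he : IsHom e) (hinj : Function.Injective e) (h0 : e c0 = c0)
    {k : ℤ} (hzero : ∀ i j, e (i, j, 0) = (k * i, k * j, 0)) :
    ∃ (m : ℤ) (g : Fin 2),
      e (0, 0, 1) = (m, m, g) ∧ 0 ≤ m ∧ m + g ≤ k ∧ (g = 0 → 0 < m ∧ m < k) := by
  have r₁ := bzMul_eq_iff.1 (he.map_mul_eq (show bzMul (0, 0, 1) (0, 0, 1) = (0, 0, 1) by decide))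
  have r₂ := bzMul_eq_iff.1 (he.map_mul_eq (show bzMul c0 (0, 0, 1) = (0, 0, 1) by decide))
  have r₃ := bzMul_eq_iff.1 (he.map_mul_eq (show bzMul (0, 0, 1) (1, 1, 0) = (1, 1, 0) by decide))
  rw [h0] at r₂
  rw [hzero] at r₃
  simp only [c0, mul_one] at r₂ r₃
  obtain ⟨m, g, hE⟩ : ∃ (m : ℤ) (g : Fin 2), e (0, 0, 1) = (m, m, g) :=
    ⟨(e (0, 0, 1)).1, (e (0, 0, 1)).2.2, BZF.eq_iff.2 (by dsimp only; omega)⟩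
  rw [hE] at r₂ r₃
  dsimp only at r₂ r₃
  have hm : 0 ≤ m := by omega
  refine ⟨m, g, hE, hm, by omega, ?_⟩
  rintro rfl
  refine ⟨lt_of_le_of_ne hm ?_, lt_of_le_of_ne (by omega) ?_⟩
  · rintro rfl
    exact hinj.ne (show ((0, 0, 1) : BZF) ≠ c0 by decide) (hE.trans h0.symm)
  · rintro rfl
    exact hinj.ne (show ((0, 0, 1) : BZF) ≠ (1, 1, 0) by decide) (by rw [hE, hzero, mul_one])

theorem map_flag_one (he : IsHom e) {k m : ℤ} {g : Fin 2} (hm : 0 ≤ m)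
    (hzero : ∀ i j, e (i, j, 0) = (k * i, k * j, 0)) (hE : e (0, 0, 1) = (m, m, g)) (i j : ℤ) :
    e (i, j, 1) = (m + k * i, m + k * j, g) := by
  have hrow : e (i, 0, 1) = (m + k * i, m, g) := by
    rw [← he.map_mul_eq (show bzMul (i, 0, 0) (0, 0, 1) = (i, 0, 1) from
      bzMul_eq_iff.2 (by dsimp only; omega)), hzero, hE]
    exact bzMul_eq_iff.2 (by dsimp only; omega)
  rw [← he.map_mul_eq (show bzMul (i, 0, 1) (0, j, 0) = (i, j, 1) from
    bzMul_eq_iff.2 (by dsimp only; omega)), hrow, hzero]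
  exact bzMul_eq_iff.2 (by dsimp only; omega)

end IsHom

/-- Every injective `(0,0,[0))`-endomorphism of `B_Z^{F²}` equals some `α_{k,p}`
or some `β_{k,p}`. -/
theorem injective_endo_fixing_c0_classification (e : BZF → BZF)
    (he : IsHom e) (hinj : Function.Injective e) (h0 : e c0 = c0) :
    (∃ k p : ℤ, 0 < k ∧ 0 ≤ p ∧ p < k ∧ e = alphaMap k p) ∨
    (∃ k p : ℤ, 2 ≤ k ∧ 1 ≤ p ∧ p < k ∧ e = betaMap k p) := by
  obtain ⟨k, hk, h₁, h₂⟩ := he.exists_map_generators hinj h0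
  have hzero := he.map_flag_zero h0 hk.le h₁ h₂
  obtain ⟨m, g, hE, hm, hmk, hg⟩ := he.exists_map_zero_zero_one hinj h0 hzero
  have hone := he.map_flag_one hm hzero hE
  have he_eq : e = fun x ↦
      if x.2.2 = 0 then (k * x.1, k * x.2.1, 0) else (m + k * x.1, m + k * x.2.1, g) := by
    funext ⟨i, j, f⟩
    fin_cases f
    · exact hzero i j
    · exact hone i j
  fin_cases g
  · right
    obtain ⟨hm₀, hmk⟩ := hg rfl
    exact ⟨k, m, by omega, hm₀, hmk, he_eq⟩
  · left
    exact ⟨k, m, hk, hm, by simpa using hmk, he_eq⟩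
end

section
/- The map ã : B_Z^{F²} → B_Z^{F²} defined by (i, j, [q)) ↦ (i+q, j+q, [1−q)) for i, j ∈ ℤ and q ∈ {0,1} is an automorphism of B_Z^{F²}, and ã² = h₁, where h₁ is the shift automorphism (i,j,[q)) ↦ (i+1, j+1, [q)). -/
/-- The shift map `h_s` on `B_Z^{F²}`. -/
def hMap (s : ℤ) (x : BZF) : BZF := (x.1 + s, x.2.1 + s, x.2.2)


/-- The map `ã` on `B_Z^{F²}`: `(i,j,[q)) ↦ (i+q, j+q, [1-q))`. -/
def aTilde (x : BZF) : BZF :=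
  (x.1 + ((x.2.2 : ℕ) : ℤ), x.2.1 + ((x.2.2 : ℕ) : ℤ), 1 - x.2.2)

/-!
Doubling the integer coordinates, `(i, j, [q)) ↦ (2i + q, 2j + q)` embeds `B_ℤ^{F²}` into the
extended bicyclic semigroup on `ℤ × ℤ`, whose multiplication commutes with the diagonal
translations `(a, b) ↦ (a + n, b + n)`. Under this embedding `ã` becomes translation by `1` and
`h₁` translation by `2`, so `ã` is an endomorphism and `ã² = h₁`; bijectivity follows from that
of `h₁`.
-/

/-- The extended bicyclic semigroup multiplication on `ℤ × ℤ`. -/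
def bicyclicMul (x y : ℤ × ℤ) : ℤ × ℤ :=
  if x.2 ≤ y.1 then (x.1 - x.2 + y.1, y.2) else (x.1, x.2 - y.1 + y.2)

theorem bicyclicMul_add_diag (x y : ℤ × ℤ) (n : ℤ) :
    bicyclicMul (x + (n, n)) (y + (n, n)) = bicyclicMul x y + (n, n) := by
  unfold bicyclicMul
  simp only [Prod.fst_add, Prod.snd_add, add_le_add_iff_right]
  split_ifs <;> ext <;> simp <;> ring

def doubling (x : BZF) : ℤ × ℤ := (2 * x.1 + (x.2.2 : ℕ), 2 * x.2.1 + (x.2.2 : ℕ))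

theorem doubling_injective : Function.Injective doubling := by
  rintro ⟨i, j, q⟩ ⟨i', j', q'⟩ h
  simp only [doubling, Prod.mk.injEq] at h
  have hq := q.isLt
  have hq' := q'.isLt
  have hqq' : q = q' := Fin.ext (by omega)
  subst hqq'
  simp only [Prod.mk.injEq, and_true]
  omega

theorem famOfInt_val_s12 (v : ℤ) : ((famOfInt v : ℕ) : ℤ) = min (max v 0) 1 := by
  unfold famOfInt
  split_ifs <;> simp <;> omega

theorem doubling_bzMul (x y : BZF) :
    doubling (bzMul x y) = bicyclicMul (doubling x) (doubling y) := by
  have hx := x.2.2.isLt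
  have hy := y.2.2.isLt
  unfold bzMul bicyclicMul doubling
  split_ifs <;> simp only [famOfInt_val_s12, Prod.mk.injEq] <;> omega

theorem doubling_aTilde (x : BZF) : doubling (aTilde x) = doubling x + (1, 1) := by
  obtain ⟨i, j, q⟩ := x
  fin_cases q
  · simp [doubling, aTilde]
  · simp [doubling, aTilde, Prod.ext_iff]
    omega

theorem doubling_hMap (s : ℤ) (x : BZF) : doubling (hMap s x) = doubling x + (2 * s, 2 * s) := by
  simp only [doubling, hMap, Prod.mk_add_mk, Prod.mk.injEq]
  constructor <;> ring

theorem hMap_bijective (s : ℤ) : Function.Bijective (hMap s) :=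
  Function.bijective_iff_has_inverse.mpr
    ⟨hMap (-s), fun x => by simp [hMap], fun x => by simp [hMap]⟩

theorem aTilde_isHom : IsHom aTilde := fun x y => doubling_injective <| by
  rw [doubling_aTilde, doubling_bzMul, doubling_bzMul, doubling_aTilde, doubling_aTilde,
    bicyclicMul_add_diag]

theorem aTilde_aTilde (x : BZF) : aTilde (aTilde x) = hMap 1 x := doubling_injective <| by
  rw [doubling_aTilde, doubling_aTilde, doubling_hMap, add_assoc]
  rfl

/-- `ã` is an automorphism of `B_Z^{F²}` and `ã² = h₁`. -/
theorem aTilde_automorphism_and_sq :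
    IsHom aTilde ∧ Function.Bijective aTilde ∧
    (∀ x : BZF, aTilde (aTilde x) = hMap 1 x) := by
  have hsq : aTilde ∘ aTilde = hMap 1 := funext aTilde_aTilde
  have hbij : Function.Bijective (aTilde ∘ aTilde) := hsq ▸ hMap_bijective 1
  exact ⟨aTilde_isHom, ⟨hbij.1.of_comp, hbij.2.of_comp⟩, aTilde_aTilde⟩
end

section
/- For any endomorphism e of B_Z^{F²} there exist an endomorphism e₀ of B_Z^{F²} with (0,0,[0))e₀ = (0,0,[0)) and an automorphism a of B_Z^{F²} such that e = e₀ ∘ a (first apply e₀, then a). Moreover, if e is injective then e₀ is injective. -/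
lemma IsHom.comp {f g : BZF → BZF} (hf : IsHom f) (hg : IsHom g) : IsHom (g ∘ f) := by
  intro x y
  simp only [Function.comp_apply]
  rw [hf, hg]

lemma IsHom.symm {a : BZF ≃ BZF} (ha : IsHom a) : IsHom a.symm := by
  intro x y
  apply a.injective
  rw [ha]
  simp only [Equiv.apply_symm_apply]

lemma bzMul_c0_c0 : bzMul c0 c0 = c0 := by
  simp [bzMul, c0, famOfInt]

lemma fst_eq_of_bzMul_self_eq {x : BZF} (hx : bzMul x x = x) : x.1 = x.2.1 := by
  obtain ⟨i, j, q⟩ := x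
  simp only [bzMul] at hx
  grind

def bzTranslate (n : ℤ) : BZF ≃ BZF where
  toFun x := (x.1 + n, x.2.1 + n, x.2.2)
  invFun x := (x.1 - n, x.2.1 - n, x.2.2)
  left_inv x := by simp
  right_inv x := by simp

def bzHalfShift : BZF ≃ BZF where
  toFun x := (x.1 + x.2.2, x.2.1 + x.2.2, famOfInt (1 - x.2.2))
  invFun x := (x.1 - 1 + x.2.2, x.2.1 - 1 + x.2.2, famOfInt (1 - x.2.2))
  left_inv := by rintro ⟨i, j, q⟩; fin_cases q <;> simp [famOfInt]
  right_inv := by rintro ⟨i, j, q⟩; fin_cases q <;> simp [famOfInt]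

lemma isHom_bzTranslate (n : ℤ) : IsHom (bzTranslate n) := by
  rintro ⟨i₁, j₁, q₁⟩ ⟨i₂, j₂, q₂⟩
  simp only [bzMul, bzTranslate, Equiv.coe_fn_mk]
  grind [famOfInt]

lemma isHom_bzHalfShift : IsHom bzHalfShift := by
  rintro ⟨i₁, j₁, q₁⟩ ⟨i₂, j₂, q₂⟩
  simp only [bzMul, bzHalfShift, Equiv.coe_fn_mk]
  grind [famOfInt]

lemma exists_isHom_equiv_apply_c0 {x : BZF} (hx : bzMul x x = x) :
    ∃ a : BZF ≃ BZF, IsHom a ∧ a c0 = x := by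
  obtain ⟨i, j, q⟩ := x
  obtain rfl : i = j := fst_eq_of_bzMul_self_eq hx
  fin_cases q
  · exact ⟨bzTranslate i, isHom_bzTranslate i, by simp [bzTranslate, c0]⟩
  · refine ⟨(bzTranslate i).trans bzHalfShift, (isHom_bzTranslate i).comp isHom_bzHalfShift, ?_⟩
    simp [bzTranslate, bzHalfShift, c0, famOfInt]

/-- Every endomorphism `e` of `B_Z^{F²}` factors as `e = e₀ ∘ a` (first `e₀`, then
`a`) with `e₀` a `(0,0,[0))`-endomorphism and `a` an automorphism; if `e` is
injective then so is `e₀`. -/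
theorem endo_factorization (e : BZF → BZF) (he : IsHom e) :
    ∃ e₀ a : BZF → BZF,
      IsHom e₀ ∧ e₀ c0 = c0 ∧
      IsHom a ∧ Function.Bijective a ∧
      (∀ x : BZF, e x = a (e₀ x)) ∧
      (Function.Injective e → Function.Injective e₀) := by
  have hidem : bzMul (e c0) (e c0) = e c0 := by rw [← he, bzMul_c0_c0]
  obtain ⟨a, ha, hac⟩ := exists_isHom_equiv_apply_c0 hidem
  refine ⟨a.symm ∘ e, a, he.comp ha.symm, ?_, ha, a.bijective, fun x => ?_,
    a.symm.injective.comp⟩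
  · simp [← hac]
  · simp
end

section
/- Every injective endomorphism e of B_Z^{F²} is of the form e = e₀ ∘ a where a is an automorphism of B_Z^{F²} and e₀ = α_{k,p} for some positive integer k and p ∈ {0,…,k−1}, or e₀ = β_{k,p} for some integer k ≥ 2 and p ∈ {1,…,k−1}. -/
/-! The coding `(i, j, [q)) ↦ (2i + q, 2j + q)` embeds `B_Z^{F²}` into the extended bicyclic
semigroup on `ℤ × ℤ`, with image the pairs of equal parity. The idempotents are the diagonal
pairs `(m, m)`, so an endomorphism `e` induces a map `σ : ℤ → ℤ` on them; since every element
`u` has an inverse `u'` with `u u' = (u.1, u.1)` and `u' u = (u.2, u.2)`, `e` acts on codes as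
`σ × σ`. Multiplying by idempotents shows that `σ` is monotone and that its increments
`σ (x + 1) - σ x` depend only on the parity of `x`, so `σ` is affine on each parity class.
Injectivity of `e` makes both increments positive, and their parities decide between `α_{k,p}`
and `β_{k,p}`; the constant term `σ 0` is a shift of codes, which is an automorphism. -/

def extBicyclicMul (u v : ℤ × ℤ) : ℤ × ℤ :=
  (u.1 - u.2 + max u.2 v.1, v.2 - v.1 + max u.2 v.1)

lemma extBicyclicMul_eq_of_inverse {u v : ℤ × ℤ} {a b : ℤ}
    (h₁ : extBicyclicMul u v = (a, a)) (h₂ : extBicyclicMul v u = (b, b))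
    (h₃ : extBicyclicMul (a, a) u = u) : u = (a, b) := by
  simp only [extBicyclicMul, Prod.ext_iff] at h₁ h₂ h₃ ⊢
  omega

def parityAffine (a b n : ℤ) : ℤ := a * (n / 2) + b * (n % 2)

lemma parityAffine_two_mul_add (a b i : ℤ) (q : Fin 2) :
    parityAffine a b (2 * i + ((q : ℕ) : ℤ)) = a * i + b * ((q : ℕ) : ℤ) := by
  have hq := q.isLt
  have h₁ : (2 * i + ((q : ℕ) : ℤ)) / 2 = i := by omega
  have h₂ : (2 * i + ((q : ℕ) : ℤ)) % 2 = ((q : ℕ) : ℤ) := by omega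
  rw [parityAffine, h₁, h₂]

lemma add_two_mul_eq_of_add_two {f : ℤ → ℤ} {a : ℤ} (h : ∀ x, f (x + 2) = f x + a) (x i : ℤ) :
    f (x + 2 * i) = f x + a * i := by
  induction i using Int.induction_on with
  | zero => simp
  | succ i ih => rw [show x + 2 * (i + 1) = x + 2 * i + 2 by ring, h, ih]; ring
  | pred i ih =>
    have := h (x + 2 * (-i - 1))
    rw [show x + 2 * (-i - 1) + 2 = x + 2 * -i by ring, ih] at this
    linear_combination -this

lemma eq_parityAffine_of_add_one {σ : ℤ → ℤ}
    (hstep : ∀ {x m : ℤ}, x % 2 = m % 2 → σ (x + 1) = σ x + σ (m + 1) - σ m) (n : ℤ) :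
    σ n = parityAffine (σ 2 - σ 0) (σ 1 - σ 0) n + σ 0 := by
  have hstep₀ : ∀ x, x % 2 = 0 → σ (x + 1) = σ x + (σ 1 - σ 0) := fun x h => by
    have := hstep (x := x) (m := 0) (by omega)
    rw [zero_add] at this
    omega
  have hstep₁ : ∀ x, x % 2 = 1 → σ (x + 1) = σ x + (σ 2 - σ 1) := fun x h => by
    have := hstep (x := x) (m := 1) (by omega)
    rw [show (1 : ℤ) + 1 = 2 by norm_num] at this
    omega
  have hadd_two : ∀ x, σ (x + 2) = σ x + (σ 2 - σ 0) := fun x => by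
    rw [show x + 2 = x + 1 + 1 by ring]
    rcases Int.emod_two_eq_zero_or_one x with h | h
    · rw [hstep₁ _ (by omega), hstep₀ x h]; ring
    · rw [hstep₀ _ (by omega), hstep₁ x h]; ring
  have hrem : σ (n % 2) = σ 0 + (σ 1 - σ 0) * (n % 2) := by
    rcases Int.emod_two_eq_zero_or_one n with h | h <;> rw [h] <;> ring
  have := add_two_mul_eq_of_add_two hadd_two (n % 2) (n / 2)
  rw [show n % 2 + 2 * (n / 2) = n by omega, hrem] at this
  rw [this, parityAffine]
  ring

lemma exists_eq_parityAffine {σ : ℤ → ℤ} (hmono : StrictMono σ)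
    (hpar : ∀ {M N : ℤ}, M % 2 = N % 2 → σ M % 2 = σ N % 2)
    (hstep : ∀ {x m : ℤ}, x % 2 = m % 2 → σ (x + 1) = σ x + σ (m + 1) - σ m) :
    (∃ k p : ℤ, 0 < k ∧ 0 ≤ p ∧ p < k ∧ ∀ n, σ n = parityAffine (2 * k) (2 * p + 1) n + σ 0) ∨
    (∃ k p : ℤ, 2 ≤ k ∧ 1 ≤ p ∧ p < k ∧ ∀ n, σ n = parityAffine (2 * k) (2 * p) n + σ 0) := by
  have h01 := hmono (show (0 : ℤ) < 1 by norm_num)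
  have h12 := hmono (show (1 : ℤ) < 2 by norm_num)
  have h02 := hpar (show (0 : ℤ) % 2 = 2 % 2 by norm_num)
  -- the increments `σ 1 - σ 0` and `σ 2 - σ 1` are positive and their sum is even
  obtain ⟨k, hk⟩ : ∃ k, σ 2 - σ 0 = 2 * k := ⟨(σ 2 - σ 0) / 2, by omega⟩
  rcases Int.emod_two_eq_zero_or_one (σ 1 - σ 0) with hr | hr
  · right
    refine ⟨k, (σ 1 - σ 0) / 2, by omega, by omega, by omega, fun n => ?_⟩
    rw [eq_parityAffine_of_add_one hstep n, hk, show 2 * ((σ 1 - σ 0) / 2) = σ 1 - σ 0 by omega]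
  · left
    refine ⟨k, (σ 1 - σ 0) / 2, by omega, by omega, by omega, fun n => ?_⟩
    rw [eq_parityAffine_of_add_one hstep n, hk, show 2 * ((σ 1 - σ 0) / 2) + 1 = σ 1 - σ 0 by omega]

namespace BZF

def code (x : BZF) : ℤ × ℤ := (2 * x.1 + ((x.2.2 : ℕ) : ℤ), 2 * x.2.1 + ((x.2.2 : ℕ) : ℤ))

def decode (u : ℤ × ℤ) : BZF := (u.1 / 2, u.2 / 2, famOfInt (u.1 % 2))

def idem (m : ℤ) : BZF := decode (m, m)

def shift (c : ℤ) (x : BZF) : BZF := decode (code x + (c, c))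

lemma code_injective : Function.Injective code := by
  rintro ⟨i, j, q⟩ ⟨i', j', q'⟩ h
  simp only [code, Prod.mk.injEq] at h
  fin_cases q <;> fin_cases q' <;> simp_all <;> omega

lemma code_fst_emod_two (x : BZF) : (code x).1 % 2 = (code x).2 % 2 := by
  simp only [code]
  omega

lemma code_decode {u : ℤ × ℤ} (h : u.1 % 2 = u.2 % 2) : code (decode u) = u := by
  have hfam : ((famOfInt (u.1 % 2) : ℕ) : ℤ) = u.1 % 2 := by
    unfold famOfInt
    split_ifs <;> simp <;> omega
  simp only [code, decode, hfam, Prod.ext_iff]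
  omega

lemma code_bzMul (x y : BZF) : code (bzMul x y) = extBicyclicMul (code x) (code y) := by
  obtain ⟨i₁, j₁, q₁⟩ := x
  obtain ⟨i₂, j₂, q₂⟩ := y
  fin_cases q₁ <;> fin_cases q₂ <;>
    (simp only [bzMul, famOfInt]; split_ifs <;> simp_all [code, extBicyclicMul, Prod.ext_iff] <;> omega)

lemma code_idem (m : ℤ) : code (idem m) = (m, m) := code_decode rfl

lemma idem_injective : Function.Injective idem := fun m n h => by
  simpa [code_idem] using congrArg code h

lemma bzMul_idem (m n : ℤ) : bzMul (idem m) (idem n) = idem (max m n) :=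
  code_injective <| by
    simp only [code_bzMul, code_idem, extBicyclicMul, Prod.ext_iff]
    omega

lemma eq_idem_of_bzMul_self {y : BZF} (h : bzMul y y = y) : y = idem (code y).1 := by
  apply code_injective
  have hc := congrArg code h
  simp only [code_bzMul, extBicyclicMul, Prod.ext_iff] at hc
  rw [code_idem]
  exact Prod.ext rfl (by omega)

lemma code_shift (c : ℤ) (x : BZF) : code (shift c x) = code x + (c, c) :=
  code_decode (by have := code_fst_emod_two x; simp only [Prod.fst_add, Prod.snd_add]; omega)

lemma isHom_shift (c : ℤ) : IsHom (shift c) := fun x y =>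
  code_injective <| by
    simp only [code_shift, code_bzMul, extBicyclicMul, Prod.ext_iff, Prod.fst_add, Prod.snd_add]
    omega

lemma bijective_shift (c : ℤ) : Function.Bijective (shift c) := by
  refine Function.bijective_iff_has_inverse.mpr ⟨shift (-c), fun x => ?_, fun x => ?_⟩ <;>
    exact code_injective (by simp [code_shift, add_assoc])

lemma code_alphaMap (k p : ℤ) (x : BZF) :
    code (alphaMap k p x) =
      Prod.map (parityAffine (2 * k) (2 * p + 1)) (parityAffine (2 * k) (2 * p + 1)) (code x) := by
  obtain ⟨i, j, q⟩ := x
  simp only [code, Prod.map, parityAffine_two_mul_add]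
  fin_cases q <;> simp [alphaMap] <;> constructor <;> ring

lemma code_betaMap (k p : ℤ) (x : BZF) :
    code (betaMap k p x) =
      Prod.map (parityAffine (2 * k) (2 * p)) (parityAffine (2 * k) (2 * p)) (code x) := by
  obtain ⟨i, j, q⟩ := x
  simp only [code, Prod.map, parityAffine_two_mul_add]
  fin_cases q <;> simp [betaMap] <;> constructor <;> ring

lemma eq_shift_of_code {e e₀ : BZF → BZF} {σ τ : ℤ → ℤ} {c : ℤ}
    (he : ∀ x, code (e x) = Prod.map σ σ (code x))
    (he₀ : ∀ x, code (e₀ x) = Prod.map τ τ (code x)) (hστ : ∀ n, σ n = τ n + c) (x : BZF) :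
    e x = shift c (e₀ x) :=
  code_injective <| by
    rw [he, code_shift, he₀]
    ext <;> simp [hστ]

end BZF

open BZF

namespace IsHom

variable {e : BZF → BZF} {σ : ℤ → ℤ}

lemma exists_map_idem (he : IsHom e) : ∃ σ : ℤ → ℤ, ∀ m, e (idem m) = idem (σ m) :=
  ⟨fun m => (code (e (idem m))).1, fun m => eq_idem_of_bzMul_self <| by
    rw [← he, bzMul_idem, max_self]⟩

lemma code_apply (he : IsHom e) (hσ : ∀ m, e (idem m) = idem (σ m)) (x : BZF) :
    code (e x) = Prod.map σ σ (code x) := by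
  rcases hx : code x with ⟨M, N⟩
  have hpar := code_fst_emod_two x
  rw [hx] at hpar
  have hinv : code (decode (N, M)) = (N, M) := code_decode hpar.symm
  have h₁ : bzMul x (decode (N, M)) = idem M := code_injective <| by
    simp only [code_bzMul, hinv, code_idem, hx, extBicyclicMul, Prod.ext_iff]
    omega
  have h₂ : bzMul (decode (N, M)) x = idem N := code_injective <| by
    simp only [code_bzMul, hinv, code_idem, hx, extBicyclicMul, Prod.ext_iff]
    omega
  have h₃ : bzMul (idem M) x = x := code_injective <| by
    simp only [code_bzMul, code_idem, hx, extBicyclicMul, Prod.ext_iff]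
    omega
  refine extBicyclicMul_eq_of_inverse (v := code (e (decode (N, M)))) ?_ ?_ ?_
  · rw [← code_bzMul, ← he, h₁, hσ, code_idem]
  · rw [← code_bzMul, ← he, h₂, hσ, code_idem]
  · rw [← code_idem, ← code_bzMul, ← hσ, ← he, h₃]

lemma map_max (he : IsHom e) (hσ : ∀ m, e (idem m) = idem (σ m)) (m n : ℤ) :
    σ (max m n) = max (σ m) (σ n) :=
  idem_injective <| by rw [← hσ, ← bzMul_idem, he, hσ, hσ, bzMul_idem]

lemma monotone (he : IsHom e) (hσ : ∀ m, e (idem m) = idem (σ m)) : Monotone σ := fun m n h => by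
  have := he.map_max hσ m n
  rw [max_eq_right h] at this
  omega

lemma map_emod_two (he : IsHom e) (hσ : ∀ m, e (idem m) = idem (σ m)) {M N : ℤ}
    (h : M % 2 = N % 2) : σ M % 2 = σ N % 2 := by
  have := code_fst_emod_two (e (decode (M, N)))
  rwa [he.code_apply hσ, code_decode (u := (M, N)) h] at this

lemma map_add_one_s15 (he : IsHom e) (hσ : ∀ m, e (idem m) = idem (σ m)) {x m : ℤ}
    (h : x % 2 = m % 2) : σ (x + 1) = σ x + σ (m + 1) - σ m := by
  have hxm : code (decode (x, m)) = (x, m) := code_decode h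
  have hprod : code (bzMul (decode (x, m)) (idem (m + 1))) = (x + 1, m + 1) := by
    simp only [code_bzMul, hxm, code_idem, extBicyclicMul, Prod.ext_iff]
    omega
  have hc := congrArg code (he (decode (x, m)) (idem (m + 1)))
  rw [he.code_apply hσ, hprod, code_bzMul, he.code_apply hσ, he.code_apply hσ, hxm, code_idem] at hc
  have hmono := he.monotone hσ (show m ≤ m + 1 by omega)
  simp only [Prod.map, extBicyclicMul, Prod.ext_iff] at hc
  omega

end IsHom

/-- Every injective endomorphism of `B_Z^{F²}` is `e₀ ∘ a` with `a` an automorphism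
and `e₀` equal to some `α_{k,p}` or some `β_{k,p}`. -/
theorem injective_endo_classification (e : BZF → BZF)
    (he : IsHom e) (hinj : Function.Injective e) :
    ∃ e₀ a : BZF → BZF,
      IsHom a ∧ Function.Bijective a ∧
      (∀ x : BZF, e x = a (e₀ x)) ∧
      ((∃ k p : ℤ, 0 < k ∧ 0 ≤ p ∧ p < k ∧ e₀ = alphaMap k p) ∨
       (∃ k p : ℤ, 2 ≤ k ∧ 1 ≤ p ∧ p < k ∧ e₀ = betaMap k p)) := by
  obtain ⟨σ, hσ⟩ := he.exists_map_idem
  have hσ_inj : Function.Injective σ := fun m n h =>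
    idem_injective <| hinj <| by rw [hσ, hσ, h]
  have hcode := he.code_apply hσ
  rcases exists_eq_parityAffine ((he.monotone hσ).strictMono_of_injective hσ_inj)
      (he.map_emod_two hσ) (he.map_add_one_s15 hσ) with
    ⟨k, p, hk, hp, hpk, hστ⟩ | ⟨k, p, hk, hp, hpk, hστ⟩
  · exact ⟨alphaMap k p, shift (σ 0), isHom_shift _, bijective_shift _,
      eq_shift_of_code hcode (code_alphaMap k p) hστ, Or.inl ⟨k, p, hk, hp, hpk, rfl⟩⟩
  · exact ⟨betaMap k p, shift (σ 0), isHom_shift _, bijective_shift _,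
      eq_shift_of_code hcode (code_betaMap k p) hστ, Or.inr ⟨k, p, hk, hp, hpk, rfl⟩⟩
end

section
/- For any integer k, the set B_Z^{F²}(k,k,0) = (k,k,[0)) · B_Z^{F²} · (k,k,[0)) is a subsemigroup of B_Z^{F²} isomorphic to B_ω^{F²}. -/
/-- The subsemigroup `B_Z^{F²}(k,k,0) = (k,k,[0)) ⬝ B_Z^{F²} ⬝ (k,k,[0))`. -/
def Sk (k : ℤ) : Set BZF :=
  {z | ∃ x : BZF, z = bzMul (bzMul ((k, k, (0 : Fin 2)) : BZF) x) ((k, k, (0 : Fin 2)) : BZF)}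


/-- Elements of `B_ω^{F²}`. -/
abbrev BWF : Type := ℕ × ℕ × Fin 2

/-- The semigroup operation on `B_ω^{F²}`. -/
def bwMul (x y : BWF) : BWF :=
  if x.2.1 ≤ y.1 then
    (x.1 + (y.1 - x.2.1), y.2.1,
      famOfInt (max (max (((x.2.2 : ℕ) : ℤ) + (x.2.1 : ℤ) - (y.1 : ℤ)) 0) ((y.2.2 : ℕ) : ℤ)))
  else
    (x.1, x.2.1 - y.1 + y.2.1,
      famOfInt (max ((x.2.2 : ℕ) : ℤ) (max (((y.2.2 : ℕ) : ℤ) + (y.1 : ℤ) - (x.2.1 : ℤ)) 0)))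

/-! The translation `(i, j, F) ↦ (k + i, k + j, F)` is an injective homomorphism
`B_ω^{F²} → B_Z^{F²}`, because the product only depends on differences of coordinates. Its image
is `B_Z^{F²}(k,k,0)`: `(k,k,[0))` is the image of the identity `(0,0,[0))` of `B_ω^{F²}`, so the
image is fixed by multiplying with it on both sides; conversely, a product has first coordinate
at least that of its left factor and second coordinate at least that of its right factor. -/

def toBZ (k : ℤ) (x : BWF) : BZF := (k + x.1, k + x.2.1, x.2.2)

def toBW (k : ℤ) (z : BZF) : BWF := ((z.1 - k).toNat, (z.2.1 - k).toNat, z.2.2)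

lemma toBZ_bwMul (k : ℤ) (x y : BWF) : toBZ k (bwMul x y) = bzMul (toBZ k x) (toBZ k y) := by
  obtain ⟨i₁, j₁, F₁⟩ := x
  obtain ⟨i₂, j₂, F₂⟩ := y
  by_cases h : j₁ ≤ i₂
  · have hk : k + (j₁ : ℤ) ≤ k + i₂ := by omega
    simp only [toBZ, bwMul, bzMul, h, hk, if_true, Prod.mk.injEq, true_and]
    exact ⟨by omega, congrArg famOfInt (by omega)⟩
  · have hk : ¬ k + (j₁ : ℤ) ≤ k + i₂ := by omega
    simp only [toBZ, bwMul, bzMul, h, hk, if_false, Prod.mk.injEq, true_and]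
    exact ⟨by omega, congrArg famOfInt (by omega)⟩

lemma toBW_toBZ (k : ℤ) : Function.LeftInverse (toBW k) (toBZ k) := by
  rintro ⟨i, j, F⟩
  simp [toBW, toBZ]

lemma toBZ_injective (k : ℤ) : Function.Injective (toBZ k) :=
  (toBW_toBZ k).injective

@[simp]
lemma famOfInt_natCast (F : Fin 2) : famOfInt ((F : ℕ) : ℤ) = F := by
  fin_cases F <;> rfl

lemma zero_bwMul (x : BWF) : bwMul 0 x = x := by
  simp [bwMul]

lemma bwMul_zero (x : BWF) : bwMul x 0 = x := by
  obtain ⟨i, j, F⟩ := x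
  rcases Nat.eq_zero_or_pos j with rfl | hj
  · simp [bwMul]
  · simp [bwMul, hj.ne']

lemma toBZ_mem_Sk (k : ℤ) (x : BWF) : toBZ k x ∈ Sk k := by
  refine ⟨toBZ k x, ?_⟩
  have hk : ((k, k, 0) : BZF) = toBZ k 0 := by simp [toBZ]
  rw [hk, ← toBZ_bwMul, ← toBZ_bwMul, zero_bwMul, bwMul_zero]

lemma fst_le_fst_bzMul (x y : BZF) : x.1 ≤ (bzMul x y).1 := by
  unfold bzMul
  split_ifs <;> dsimp only <;> omega

lemma snd_le_snd_bzMul (x y : BZF) : y.2.1 ≤ (bzMul x y).2.1 := by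
  unfold bzMul
  split_ifs <;> dsimp only <;> omega

lemma toBZ_toBW_of_mem_Sk {k : ℤ} {z : BZF} (hz : z ∈ Sk k) : toBZ k (toBW k z) = z := by
  obtain ⟨x, rfl⟩ := hz
  have h₁ := (fst_le_fst_bzMul (k, k, 0) x).trans (fst_le_fst_bzMul _ (k, k, 0))
  have h₂ := snd_le_snd_bzMul (bzMul (k, k, 0) x) (k, k, 0)
  simp only [toBZ, toBW]
  ext <;> dsimp only at * <;> omega

lemma Sk_eq_range_toBZ (k : ℤ) : Sk k = Set.range (toBZ k) :=
  Set.ext fun z =>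
    ⟨fun hz => ⟨toBW k z, toBZ_toBW_of_mem_Sk hz⟩, by rintro ⟨x, rfl⟩; exact toBZ_mem_Sk k x⟩

/-- For any integer `k`, `B_Z^{F²}(k,k,0)` is a subsemigroup of `B_Z^{F²}`
isomorphic to `B_ω^{F²}`. -/
theorem Sk_subsemigroup_iso_BW (k : ℤ) :
    (∀ a ∈ Sk k, ∀ b ∈ Sk k, bzMul a b ∈ Sk k) ∧
    ∃ φ : Sk k → BWF, Function.Bijective φ ∧
      ∀ (a b : Sk k) (h : bzMul (a : BZF) (b : BZF) ∈ Sk k),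
        φ ⟨bzMul (a : BZF) (b : BZF), h⟩ = bwMul (φ a) (φ b) := by
  refine ⟨?closed, fun z => toBW k z, ⟨?injective, ?surjective⟩, ?hom⟩
  case closed =>
    rw [Sk_eq_range_toBZ]
    rintro _ ⟨x, rfl⟩ _ ⟨y, rfl⟩
    exact ⟨bwMul x y, toBZ_bwMul k x y⟩
  case injective =>
    intro a b hab
    rw [Subtype.ext_iff, ← toBZ_toBW_of_mem_Sk a.2, ← toBZ_toBW_of_mem_Sk b.2]
    exact congrArg (toBZ k) hab
  case surjective =>
    exact fun x => ⟨⟨toBZ k x, toBZ_mem_Sk k x⟩, toBW_toBZ k x⟩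
  case hom =>
    intro a b hab
    apply toBZ_injective k
    rw [toBZ_bwMul, toBZ_toBW_of_mem_Sk hab, toBZ_toBW_of_mem_Sk a.2, toBZ_toBW_of_mem_Sk b.2]
end
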